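/- For any integrable real random variable X with mean μ and standard deviation σ, and any β ∈ ℝ, the expectation E[(X − β)⁺] is at most ((μ − β) + √((μ − β)² + σ²)) / 2, and this bound is the worst-case value of E[(X − β)⁺] over all distributions with mean μ and variance σ². -/

import Mathlib

/-!
Write `(X - β)⁺ = ((X - β) + |X - β|) / 2`. By Cauchy–Schwarz,
`E|X - β| ≤ √(E (X - β)²) = √((μ - β)² + σ²) =: a`, which gives the bound. Both
inequalities are equalities when `X` takes only the values `β ± a`, with the weights
fixed by the mean; this two-point law has variance `a² - (μ - β)² = σ²`, so the bound is
attained.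
-/

open MeasureTheory ProbabilityTheory

section
variable {Ω : Type*} [MeasurableSpace Ω] {P : Measure Ω} [IsProbabilityMeasure P] {X : Ω → ℝ}

lemma sq_integral_abs_le_integral_sq (hX : MemLp X 2 P) :
    (∫ ω, |X ω| ∂P) ^ 2 ≤ ∫ ω, X ω ^ 2 ∂P := by
  have h := variance_eq_sub (μ := P) hX.abs
  simp only [Pi.pow_apply, Pi.abs_apply, sq_abs] at h
  linarith [variance_nonneg |X| P]

lemma integral_sq_sub_const (hX : MemLp X 2 P) (β : ℝ) :
    ∫ ω, (X ω - β) ^ 2 ∂P = (P[X] - β) ^ 2 + Var[X; P] := by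
  have hXβ : MemLp (fun ω => X ω - β) 2 P := hX.sub (memLp_const β)
  have h := variance_eq_sub hXβ
  rw [variance_sub_const hX.aestronglyMeasurable,
    integral_sub (hX.integrable one_le_two) (integrable_const β)] at h
  simp only [Pi.pow_apply, integral_const, probReal_univ, smul_eq_mul, one_mul] at h
  linarith

lemma integral_max_sub_zero_le (hX : MemLp X 2 P) (β : ℝ) :
    ∫ ω, max (X ω - β) 0 ∂P ≤ ((P[X] - β) + √((P[X] - β) ^ 2 + Var[X; P])) / 2 := by
  have hXβ : MemLp (fun ω => X ω - β) 2 P := hX.sub (memLp_const β)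
  have hint := hXβ.integrable one_le_two
  have hmean : ∫ ω, (X ω - β) ∂P = P[X] - β := by
    rw [integral_sub (hX.integrable one_le_two) (integrable_const β)]
    simp
  have habs : ∫ ω, |X ω - β| ∂P ≤ √((P[X] - β) ^ 2 + Var[X; P]) := by
    rw [← integral_sq_sub_const hX β]
    exact (le_abs_self _).trans (Real.abs_le_sqrt (sq_integral_abs_le_integral_sq hXβ))
  have hsplit : ∫ ω, max (X ω - β) 0 ∂P = (∫ ω, (X ω - β) ∂P + ∫ ω, |X ω - β| ∂P) / 2 := by
    rw [← integral_add hint hint.abs, ← integral_div]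
    congr 1 with ω
    rcases le_total (X ω - β) 0 with h | h
    · rw [max_eq_right h, abs_of_nonpos h]; ring
    · rw [max_eq_left h, abs_of_nonneg h]; ring
  rw [hsplit, hmean]
  linarith

end

section
variable {α : Type*} [MeasurableSpace α]

noncomputable def twoPoint (p : ℝ) (c d : α) : Measure α :=
  ENNReal.ofReal p • Measure.dirac c + ENNReal.ofReal (1 - p) • Measure.dirac d

variable {p : ℝ} {c d : α}

lemma isProbabilityMeasure_twoPoint (hp₀ : 0 ≤ p) (hp₁ : p ≤ 1) :
    IsProbabilityMeasure (twoPoint p c d) := by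
  constructor
  simp only [twoPoint, Measure.add_apply, Measure.smul_apply, measure_univ, smul_eq_mul, mul_one]
  rw [← ENNReal.ofReal_add hp₀ (sub_nonneg.2 hp₁), add_sub_cancel, ENNReal.ofReal_one]

variable [MeasurableSingletonClass α]

lemma integrable_twoPoint (f : α → ℝ) : Integrable f (twoPoint p c d) :=
  ((integrable_dirac enorm_lt_top).smul_measure ENNReal.ofReal_ne_top).add_measure
    ((integrable_dirac enorm_lt_top).smul_measure ENNReal.ofReal_ne_top)

lemma integral_twoPoint (hp₀ : 0 ≤ p) (hp₁ : p ≤ 1) (f : α → ℝ) :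
    ∫ x, f x ∂twoPoint p c d = p * f c + (1 - p) * f d := by
  rw [twoPoint, integral_add_measure
    ((integrable_dirac enorm_lt_top).smul_measure ENNReal.ofReal_ne_top)
    ((integrable_dirac enorm_lt_top).smul_measure ENNReal.ofReal_ne_top),
    integral_smul_measure, integral_smul_measure, integral_dirac, integral_dirac,
    ENNReal.toReal_ofReal hp₀, ENNReal.toReal_ofReal (sub_nonneg.2 hp₁), smul_eq_mul, smul_eq_mul]

end

lemma exists_isProbabilityMeasure_integral_max_sub_zero_eq (μ σ β : ℝ) :
    ∃ P : Measure ℝ, IsProbabilityMeasure P ∧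
      Integrable (fun x : ℝ => x) P ∧ Integrable (fun x : ℝ => x ^ 2) P ∧
      (∫ x, x ∂P) = μ ∧ (∫ x, (x - μ) ^ 2 ∂P) = σ ^ 2 ∧
      ∫ x, max (x - β) 0 ∂P = ((μ - β) + √((μ - β) ^ 2 + σ ^ 2)) / 2 := by
  set a := √((μ - β) ^ 2 + σ ^ 2)
  have ha₂ : a ^ 2 = (μ - β) ^ 2 + σ ^ 2 := Real.sq_sqrt (by positivity)
  have ha : |μ - β| ≤ a := Real.abs_le_sqrt (by nlinarith)
  have ha₀ : 0 ≤ a := Real.sqrt_nonneg _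
  set p := (a - (μ - β)) / (2 * a)
  have hp₀ : 0 ≤ p := div_nonneg (by linarith [le_abs_self (μ - β)]) (by positivity)
  have hp₁ : p ≤ 1 := div_le_one_of_le₀ (by linarith [neg_abs_le (μ - β)]) (by positivity)
  -- for `a = 0`, `p` is the junk value `0 / 0 = 0`, and `μ = β`
  have hp : 2 * a * p = a - (μ - β) := by
    rcases ha₀.eq_or_lt with h | h
    · have : μ - β = 0 := abs_nonpos_iff.1 (h ▸ ha)
      simp [← h, this]
    · exact mul_div_cancel₀ _ (by positivity)
  refine ⟨twoPoint p (β - a) (β + a), isProbabilityMeasure_twoPoint hp₀ hp₁,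
    integrable_twoPoint _, integrable_twoPoint _, ?_, ?_, ?_⟩ <;>
    rw [integral_twoPoint hp₀ hp₁]
  · linear_combination (-1 : ℝ) * hp
  · linear_combination (2 * (μ - β)) * hp + ha₂
  · rw [sub_sub_cancel_left, add_sub_cancel_left, max_eq_right (neg_nonpos.2 ha₀),
      max_eq_left ha₀]
    linear_combination (-1 / 2 : ℝ) * hp

theorem stmt7_general (μ σ β : ℝ) :
    (∀ P : Measure ℝ, IsProbabilityMeasure P →
      Integrable (fun x : ℝ => x) P → Integrable (fun x : ℝ => x ^ 2) P →
      (∫ x, x ∂P) = μ → (∫ x, (x - μ) ^ 2 ∂P) = σ ^ 2 →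
      ∫ x, max (x - β) 0 ∂P ≤ ((μ - β) + Real.sqrt ((μ - β) ^ 2 + σ ^ 2)) / 2) ∧
    sSup {y : ℝ | ∃ P : Measure ℝ, IsProbabilityMeasure P ∧
        Integrable (fun x : ℝ => x) P ∧ Integrable (fun x : ℝ => x ^ 2) P ∧
        (∫ x, x ∂P) = μ ∧ (∫ x, (x - μ) ^ 2 ∂P) = σ ^ 2 ∧
        y = ∫ x, max (x - β) 0 ∂P}
      = ((μ - β) + Real.sqrt ((μ - β) ^ 2 + σ ^ 2)) / 2 := by
  have hbound : ∀ P : Measure ℝ, IsProbabilityMeasure P →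
      Integrable (fun x : ℝ => x) P → Integrable (fun x : ℝ => x ^ 2) P →
      (∫ x, x ∂P) = μ → (∫ x, (x - μ) ^ 2 ∂P) = σ ^ 2 →
      ∫ x, max (x - β) 0 ∂P ≤ ((μ - β) + √((μ - β) ^ 2 + σ ^ 2)) / 2 := by
    intro P _ _ hX₂ hmean hvar
    have hX : MemLp (fun x : ℝ => x) 2 P :=
      (memLp_two_iff_integrable_sq aestronglyMeasurable_id).2 hX₂
    have hVar : Var[fun x : ℝ => x; P] = σ ^ 2 := by
      rw [variance_eq_integral aemeasurable_id', hmean, hvar]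
    simpa only [hmean, hVar] using integral_max_sub_zero_le hX β
  refine ⟨hbound, IsGreatest.csSup_eq ⟨?_, ?_⟩⟩
  · obtain ⟨P, hP, hX, hX₂, hmean, hvar, hmax⟩ :=
      exists_isProbabilityMeasure_integral_max_sub_zero_eq μ σ β
    exact ⟨P, hP, hX, hX₂, hmean, hvar, hmax.symm⟩
  · rintro y ⟨P, hP, hX, hX₂, hmean, hvar, rfl⟩
    exact hbound P hP hX hX₂ hmean hvar

/-- Scarf / Cantelli-type moment bound: for any real random variable `X` with mean `μ` and
variance `σ²`, `E[(X − β)⁺] ≤ ((μ − β) + √((μ − β)² + σ²))/2`; moreover this bound is the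
worst-case (supremum) value of `E[(X − β)⁺]` over all distributions with mean `μ` and
variance `σ²`. -/
theorem stmt7 (μ σ β : ℝ) (hσ : 0 < σ) :
    (∀ P : Measure ℝ, IsProbabilityMeasure P →
      Integrable (fun x : ℝ => x) P → Integrable (fun x : ℝ => x ^ 2) P →
      (∫ x, x ∂P) = μ → (∫ x, (x - μ) ^ 2 ∂P) = σ ^ 2 →
      ∫ x, max (x - β) 0 ∂P ≤ ((μ - β) + Real.sqrt ((μ - β) ^ 2 + σ ^ 2)) / 2) ∧
    sSup {y : ℝ | ∃ P : Measure ℝ, IsProbabilityMeasure P ∧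
        Integrable (fun x : ℝ => x) P ∧ Integrable (fun x : ℝ => x ^ 2) P ∧
        (∫ x, x ∂P) = μ ∧ (∫ x, (x - μ) ^ 2 ∂P) = σ ^ 2 ∧
        y = ∫ x, max (x - β) 0 ∂P}
      = ((μ - β) + Real.sqrt ((μ - β) ^ 2 + σ ^ 2)) / 2 :=
  stmt7_general μ σ β
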